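/- Let R = ℂ[E₁,E₂] with the derivations e, f, h as above and δ = 4E₂ − E₁². Then the family of vectors consisting of 1, the iterates f^r(E₁) for all r ∈ ℕ, and the iterates f^r(δʲ) for all integers j ≥ 1 and r ∈ ℕ, forms a ℂ-vector space basis of R. (This is the content of the 𝔰𝔩₂-module decomposition ℂ[E₁,E₂] ≅ M*(0) ⊕ ⊕_{j≥1} M(−4j) of the skein lasagna module of the 4-ball.) -/
import Mathlib


open MvPolynomial

namespace Sl2Aux
noncomputable section

abbrev R2 := MvPolynomial (Fin 2) ℂ

def μ (a j : ℕ) : R2 := X 0 ^ a * X 1 ^ j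

def Gd : Derivation ℂ R2 R2 :=
  MvPolynomial.mkDerivation ℂ ![C (1/2 : ℂ) * (X 0 ^ 2 - X 1), 2 * X 0 * X 1]

lemma Gd_X0 : Gd (X 0) = C (1/2 : ℂ) * (X 0 ^ 2 - X 1) := by
  simp [Gd, mkDerivation_X]

lemma Gd_X1 : Gd (X 1) = 2 * X 0 * X 1 := by
  simp [Gd, mkDerivation_X]

lemma C2 : (2 : R2) = C (2 : ℂ) := (map_ofNat (C : ℂ →+* R2) 2).symm

lemma G_mono (a j : ℕ) :
    Gd (μ a j) = (C (j:ℂ) * 2 + C (a:ℂ) * C (1/2 : ℂ)) * μ (a+1) j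
      - C (a:ℂ) * C (1/2 : ℂ) * μ (a-1) (j+1) := by
  rcases a with _ | a <;> rcases j with _ | j <;>
    simp only [μ, Derivation.leibniz, Derivation.leibniz_pow, Gd_X0, Gd_X1,
      smul_eq_mul, nsmul_eq_mul, Nat.cast_zero, Nat.cast_succ, C2, map_zero, map_add, map_one,
      Derivation.map_one_eq_zero, pow_zero, Nat.sub_zero, Nat.add_sub_cancel, Nat.zero_sub,
      Nat.cast_add, Nat.cast_one] <;>
    (try simp only [← map_natCast (C : ℂ →+* R2)]) <;> ring

/-- the "error space": span of monomials of weight `n` with `X 1`-exponent `> j`. -/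
def SP (n j : ℕ) : Submodule ℂ R2 :=
  Submodule.span ℂ {q | ∃ a' j', q = μ a' j' ∧ a' + 2*j' = n ∧ j < j'}

lemma mem_SP {n j a' j' : ℕ} (h1 : a' + 2*j' = n) (h2 : j < j') (c : ℂ) :
    C c * μ a' j' ∈ SP n j := by
  rw [← smul_eq_C_mul]
  exact Submodule.smul_mem _ _ (Submodule.subset_span ⟨a', j', rfl, h1, h2⟩)

lemma Gd_SP {n j : ℕ} {q : R2} (hq : q ∈ SP n j) : Gd q ∈ SP (n+1) j := by
  have hle : SP n j ≤ (SP (n+1) j).comap Gd.toLinearMap := by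
    rw [SP, Submodule.span_le]
    rintro _ ⟨a', j', rfl, hw, hj⟩
    simp only [SetLike.mem_coe, Submodule.mem_comap]
    show Gd (μ a' j') ∈ SP (n+1) j
    rw [G_mono]
    rcases a' with _ | a''
    · simp only [Nat.cast_zero, map_zero, zero_mul, sub_zero, add_zero, C2, ← map_mul]
      exact mem_SP (by omega) hj _
    · have h1 : (C ((a''+1:ℕ):ℂ) * 2 + C ((a''+1:ℕ):ℂ) * C (1/2 : ℂ) : R2)
          = C (((a''+1:ℕ):ℂ)*2 + ((a''+1:ℕ):ℂ)*(1/2)) := by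
        rw [C2, ← map_mul, ← map_mul, ← map_add]
      have h1 : (C ((j':ℕ):ℂ) * 2 + C ((a''+1:ℕ):ℂ) * C (1/2 : ℂ) : R2)
          = C (((j':ℕ):ℂ)*2 + ((a''+1:ℕ):ℂ)*(1/2)) := by
        rw [C2, ← map_mul, ← map_mul, ← map_add]
      have h2 : (C ((a''+1 : ℕ):ℂ) * C (1/2 : ℂ) : R2) = C (((a''+1:ℕ):ℂ)*(1/2)) := by
        rw [← map_mul]
      rw [h1, h2]
      exact sub_mem (mem_SP (by omega) hj _) (mem_SP (by omega) (by omega) _)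
  exact hle hq


lemma Gd_pow_succ (r : ℕ) (p : R2) :
    (Gd.toLinearMap ^ (r+1)) p = Gd ((Gd.toLinearMap ^ r) p) := by
  rw [pow_succ', Module.End.mul_apply]
  rfl

lemma main_lemma (a j : ℕ) (haj : 1 ≤ a + j) : ∀ r : ℕ, ∃ c : ℝ, 0 < c ∧
    (Gd.toLinearMap ^ r) (μ a j) - C (c:ℂ) * μ (a+r) j ∈ SP (a + 2*j + r) j := by
  intro r
  induction r with
  | zero =>
    exact ⟨1, one_pos, by simp [sub_self]⟩
  | succ r ih =>
    obtain ⟨c, hc, hw⟩ := ih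
    refine ⟨c * (2*j + (a+r)/2), ?_, ?_⟩
    · have h2 : (0:ℝ) < 2*j + (a+r)/2 := by
        rcases Nat.eq_zero_or_pos j with hj | hj
        · have ha : 1 ≤ a := by omega
          have : (1:ℝ) ≤ (a:ℝ) + r := by
            have : (1:ℝ) ≤ (a:ℝ) := by exact_mod_cast ha
            have : (0:ℝ) ≤ (r:ℝ) := by positivity
            linarith
          subst hj; simp; linarith
        · have : (1:ℝ) ≤ (j:ℝ) := by exact_mod_cast hj
          have : (0:ℝ) ≤ (a:ℝ) + r := by positivity
          linarith
      positivity
    · have key : (Gd.toLinearMap ^ (r+1)) (μ a j)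
          = C (c:ℂ) * Gd (μ (a+r) j) + Gd ((Gd.toLinearMap ^ r) (μ a j) - C (c:ℂ) * μ (a+r) j) := by
        rw [Gd_pow_succ, map_sub]
        have : Gd (C (c:ℂ) * μ (a+r) j) = C (c:ℂ) * Gd (μ (a+r) j) := by
          rw [← smul_eq_C_mul, Derivation.map_smul, smul_eq_C_mul]
        rw [this]; ring
      rw [key, G_mono]
      have hcoef : (C ((c * (2*(j:ℝ) + ((a:ℝ)+(r:ℝ))/2) : ℝ) : ℂ) : R2)
          = C (c:ℂ) * (C ((j:ℕ):ℂ) * 2 + C (((a+r):ℕ):ℂ) * C (1/2:ℂ)) := by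
        rw [C2, ← map_mul, ← map_mul, ← map_add, ← map_mul]
        congr 1
        push_cast
        ring
      rw [hcoef]
      have hmem1 : Gd ((Gd.toLinearMap ^ r) (μ a j) - C (c:ℂ) * μ (a+r) j)
          ∈ SP (a+2*j+(r+1)) j := Gd_SP hw
      have hmem2 : -(C (c:ℂ) * (C (((a+r):ℕ):ℂ) * C (1/2:ℂ)) * μ (a+r-1) (j+1))
          ∈ SP (a+2*j+(r+1)) j := by
        rcases Nat.eq_zero_or_pos (a+r) with h0 | h0
        · rw [h0]; simp
        · rw [← map_mul, ← map_mul]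
          exact neg_mem (mem_SP (by omega) (by omega) _)
      have hsum := add_mem hmem2 hmem1
      convert hsum using 1
      ring


def em (a j : ℕ) : Fin 2 →₀ ℕ := Finsupp.single 0 a + Finsupp.single 1 j

lemma μ_eq_monomial (a j : ℕ) : μ a j = monomial (em a j) 1 := by
  rw [μ, em, X_pow_eq_monomial, X_pow_eq_monomial, monomial_mul, mul_one]

lemma em_apply0 (a j : ℕ) : em a j 0 = a := by
  simp [em, Finsupp.single_apply]

lemma em_apply1 (a j : ℕ) : em a j 1 = j := by
  simp [em, Finsupp.single_apply]

lemma em_inj {a j a' j' : ℕ} (h : em a j = em a' j') : a = a' ∧ j = j' := by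
  constructor
  · have := DFunLike.congr_fun h (0 : Fin 2); simpa [em_apply0] using this
  · have := DFunLike.congr_fun h (1 : Fin 2); simpa [em_apply1] using this

lemma coeff_μ (a j a' j' : ℕ) :
    coeff (em a j) (μ a' j') = if a' = a ∧ j' = j then 1 else 0 := by
  rw [μ_eq_monomial, coeff_monomial]
  by_cases h : em a' j' = em a j
  · obtain ⟨h1, h2⟩ := em_inj h
    simp [h, h1, h2]
  · have hno : ¬ (a' = a ∧ j' = j) := by
      rintro ⟨rfl, rfl⟩; exact h rfl
    simp [h, hno]

lemma coeff_SP {n j : ℕ} {q : R2} (hq : q ∈ SP n j) (a' j' : ℕ)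
    (h : ¬ (a' + 2*j' = n ∧ j < j')) : coeff (em a' j') q = 0 := by
  have hle : SP n j ≤ LinearMap.ker (lcoeff ℂ (em a' j')) := by
    rw [SP, Submodule.span_le]
    rintro _ ⟨b, k, rfl, hw, hk⟩
    simp only [SetLike.mem_coe, LinearMap.mem_ker, lcoeff_apply, coeff_μ]
    have hno : ¬ (b = a' ∧ k = j') := by
      rintro ⟨rfl, rfl⟩; exact h ⟨hw, hk⟩
    simp [hno]
  simpa using hle hq

/-- The reference family in "plain" coordinates. -/
def fam : ℕ × ℕ → R2 := fun p =>
  if p.2 = 0 then (if p.1 = 0 then 1 else (Gd.toLinearMap ^ (p.1 - 1)) (X 0))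
  else (Gd.toLinearMap ^ p.1) (X 1 ^ p.2)

lemma fam_P (a j : ℕ) : ∃ c : ℝ, 0 < c ∧
    fam (a, j) - C (c:ℂ) * μ a j ∈ SP (a + 2*j) j := by
  rcases Nat.eq_zero_or_pos j with hj | hj
  · subst hj
    rcases Nat.eq_zero_or_pos a with ha | ha
    · subst ha
      refine ⟨1, one_pos, ?_⟩
      simp [fam, μ]
    · obtain ⟨a', rfl⟩ : ∃ a', a = a' + 1 := ⟨a - 1, by omega⟩
      obtain ⟨c, hc, hm⟩ := main_lemma 1 0 (by omega) a'
      refine ⟨c, hc, ?_⟩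
      have h1 : fam (a'+1, 0) = (Gd.toLinearMap ^ a') (μ 1 0) := by
        simp [fam, μ]
      have h2 : (1 + a' : ℕ) = a' + 1 := by omega
      rw [h1]
      rw [h2] at hm
      exact hm
  · obtain ⟨c, hc, hm⟩ := main_lemma 0 j (by omega) a
    have hj0 : j ≠ 0 := by omega
    refine ⟨c, hc, ?_⟩
    have h1 : fam (a, j) = (Gd.toLinearMap ^ a) (μ 0 j) := by
      simp [fam, hj0, μ]
    have h2 : (0 + a : ℕ) = a := by omega
    have h3 : (0 + 2*j + a : ℕ) = a + 2*j := by omega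
    rw [h1]
    rw [h2, h3] at hm
    exact hm

def key (p : ℕ × ℕ) : ℕ := (p.1 + 2*p.2)^2 + p.2

lemma coeff_fam_diag (p : ℕ × ℕ) : coeff (em p.1 p.2) (fam p) ≠ 0 := by
  obtain ⟨c, hc, hw⟩ := fam_P p.1 p.2
  have h1 : coeff (em p.1 p.2) (fam p - C (c:ℂ) * μ p.1 p.2) = 0 :=
    coeff_SP hw _ _ (by omega)
  rw [coeff_sub, sub_eq_zero] at h1
  rw [h1, coeff_C_mul, coeff_μ, if_pos ⟨rfl, rfl⟩, mul_one]
  exact_mod_cast hc.ne'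

lemma coeff_fam_off {p q : ℕ × ℕ} (hne : p ≠ q) (h : coeff (em q.1 q.2) (fam p) ≠ 0) :
    key p < key q := by
  obtain ⟨c, hc, hw⟩ := fam_P p.1 p.2
  have h0 : coeff (em q.1 q.2) (C (c:ℂ) * μ p.1 p.2) = 0 := by
    rw [coeff_C_mul, coeff_μ]
    have hno : ¬ (p.1 = q.1 ∧ p.2 = q.2) := by
      rintro ⟨h1, h2⟩; exact hne (Prod.ext h1 h2)
    simp [hno]
  have h1 : coeff (em q.1 q.2) (fam p - C (c:ℂ) * μ p.1 p.2) ≠ 0 := by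
    rw [coeff_sub, h0, sub_zero]; exact h
  have h2 : q.1 + 2*q.2 = p.1 + 2*p.2 ∧ p.2 < q.2 := by
    by_contra hcon
    exact h1 (coeff_SP hw q.1 q.2 hcon)
  unfold key
  rw [h2.1]
  exact Nat.add_lt_add_left h2.2 _

lemma fam_indep : LinearIndependent ℂ fam := by
  rw [linearIndependent_iff']
  intro s
  induction s using Finset.strongInduction with
  | _ s ih =>
    intro g hsum i hi
    obtain ⟨i₀, hi₀, hmin⟩ := s.exists_min_image key ⟨i, hi⟩
    have hg0 : g i₀ = 0 := by
      have hc : coeff (em i₀.1 i₀.2) (∑ p ∈ s, g p • fam p) = 0 := by rw [hsum]; simp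
      have hsum' : ∑ p ∈ s, g p * coeff (em i₀.1 i₀.2) (fam p) = 0 := by
        rw [← hc, coeff_sum]
        refine Finset.sum_congr rfl fun p _ => ?_
        rw [smul_eq_C_mul, coeff_C_mul]
      rw [Finset.sum_eq_single i₀ (fun p hp hne => ?_) (fun habs => absurd hi₀ habs)] at hsum'
      · rcases mul_eq_zero.1 hsum' with hg | hcd
        · exact hg
        · exact absurd hcd (coeff_fam_diag i₀)
      · rcases eq_or_ne (coeff (em i₀.1 i₀.2) (fam p)) 0 with hz | hz
        · rw [hz, mul_zero]
        · exact absurd (coeff_fam_off hne hz) (not_lt.2 (hmin p hp))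
    rcases eq_or_ne i i₀ with rfl | hne
    · exact hg0
    · have hsume : ∑ p ∈ s.erase i₀, g p • fam p + g i₀ • fam i₀ = ∑ p ∈ s, g p • fam p :=
        Finset.sum_erase_add s _ hi₀
      rw [hsum, hg0, zero_smul, add_zero] at hsume
      exact ih (s.erase i₀) (Finset.erase_ssubset hi₀) g hsume i
        (Finset.mem_erase.2 ⟨hne, hi⟩)

lemma μ_mem_span (a : ℕ) : ∀ j, μ a j ∈ Submodule.span ℂ (Set.range fam) := by
  induction a using Nat.strong_induction_on with
  | _ a ih =>
    intro j
    obtain ⟨c, hc, hw⟩ := fam_P a j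
    have hcne : ((c:ℝ):ℂ) ≠ 0 := by exact_mod_cast hc.ne'
    have hwmem : fam (a, j) - C (c:ℂ) * μ a j ∈ Submodule.span ℂ (Set.range fam) := by
      refine Submodule.span_le.2 ?_ hw
      rintro _ ⟨a', j', rfl, hweight, hj⟩
      exact ih a' (by omega) j'
    have hfmem : fam (a, j) ∈ Submodule.span ℂ (Set.range fam) :=
      Submodule.subset_span ⟨(a, j), rfl⟩
    have hform : μ a j = (c:ℂ)⁻¹ • (fam (a, j) - (fam (a, j) - C (c:ℂ) * μ a j)) := by
      rw [sub_sub_cancel, ← smul_eq_C_mul, smul_smul, inv_mul_cancel₀ hcne, one_smul]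
    rw [hform]
    exact Submodule.smul_mem _ _ (sub_mem hfmem hwmem)

lemma fam_span : Submodule.span ℂ (Set.range fam) = ⊤ := by
  rw [Submodule.eq_top_iff']
  intro p
  rw [as_sum p]
  apply Submodule.sum_mem
  intro m _
  have hem : em (m 0) (m 1) = m := by
    ext x
    fin_cases x
    · simpa using em_apply0 (m 0) (m 1)
    · simpa using em_apply1 (m 0) (m 1)
  have hm : monomial m (coeff m p) = C (coeff m p) * μ (m 0) (m 1) := by
    rw [μ_eq_monomial, hem, C_mul_monomial, mul_one]
  rw [hm, ← smul_eq_C_mul]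
  exact Submodule.smul_mem _ _ (μ_mem_span (m 0) (m 1))


def A1 : R2 →ₐ[ℂ] R2 := aeval ![X 0, 4 * X 1 - X 0 ^ 2]
def A2 : R2 →ₐ[ℂ] R2 := aeval ![X 0, C (1/4 : ℂ) * (X 1 + X 0 ^ 2)]

def alg : R2 ≃ₐ[ℂ] R2 :=
  AlgEquiv.ofAlgHom A1 A2
    (by
      refine algHom_ext fun i => ?_
      fin_cases i
      · simp [A1, A2]
      · simp [A1, A2]
        rw [show ((4:R2) * X 1) = C (4:ℂ) * X 1 from by rw [← map_ofNat (C : ℂ →+* R2) 4],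
          ← mul_assoc, ← map_mul]
        norm_num)
    (by
      refine algHom_ext fun i => ?_
      fin_cases i
      · simp [A1, A2]
      · simp [A1, A2, map_ofNat]
        rw [show ((4:R2) * (C (4⁻¹:ℂ) * (X 1 + X 0 ^ 2))) = C ((4:ℂ) * 4⁻¹) * (X 1 + X 0 ^ 2) from by
          rw [← map_ofNat (C : ℂ →+* R2) 4, map_mul, mul_assoc]]
        norm_num)

lemma alg_apply (p : R2) : alg p = A1 p := rfl
lemma alg_X0 : alg (X 0) = X 0 := by simp [alg_apply, A1]
lemma alg_X1 : alg (X 1) = 4 * X 1 - X 0 ^ 2 := by simp [alg_apply, A1]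
lemma alg_C (a : ℂ) : alg (C a) = C a := by simp [alg_apply, A1]

lemma conj (f : Derivation ℂ R2 R2) (hf1 : f (X 0) = X 0 ^ 2 - 2 * X 1)
    (hf2 : f (X 1) = X 0 * X 1) : ∀ p : R2, f (alg p) = alg (Gd p) := by
  have base : ∀ i : Fin 2, f (alg (X i)) = alg (Gd (X i)) := by
    intro i
    fin_cases i
    · rw [show (⟨0, by norm_num⟩ : Fin 2) = 0 from rfl, alg_X0, hf1, Gd_X0]
      rw [map_mul, map_sub, map_pow, alg_C, alg_X0, alg_X1]
      rw [show (X 0 ^ 2 - (4 * X 1 - X 0 ^ 2) : R2) = C (2:ℂ) * X 0 ^ 2 - C (4:ℂ) * X 1 from by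
        rw [map_ofNat (C : ℂ →+* R2) 2, map_ofNat (C : ℂ →+* R2) 4]; ring]
      rw [mul_sub, ← mul_assoc, ← mul_assoc, ← map_mul, ← map_mul]
      norm_num
      rw [← map_ofNat (C : ℂ →+* R2) 2]
    · rw [show (⟨1, by norm_num⟩ : Fin 2) = 1 from rfl, alg_X1, Gd_X1]
      have h4 : ((4:R2) * X 1) = (4:ℂ) • X 1 := by
        rw [smul_eq_C_mul, map_ofNat]
      rw [map_sub, h4, Derivation.map_smul, Derivation.leibniz_pow, hf1, hf2]
      rw [map_mul, map_mul, alg_X0, alg_X1, map_ofNat]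
      simp only [smul_eq_mul, nsmul_eq_mul, smul_eq_C_mul, map_ofNat, Nat.cast_ofNat]
      ring
  intro p
  induction p using MvPolynomial.induction_on with
  | C a => rw [alg_C, derivation_C, derivation_C, map_zero]
  | add p q hp hq => simp only [map_add, hp, hq]
  | mul_X p i hp =>
    rw [map_mul, Derivation.leibniz, Derivation.leibniz, map_add, smul_eq_mul, smul_eq_mul,
      smul_eq_mul, smul_eq_mul, map_mul, map_mul, hp, base i]

lemma conj_pow (f : Derivation ℂ R2 R2) (hf1 : f (X 0) = X 0 ^ 2 - 2 * X 1)
    (hf2 : f (X 1) = X 0 * X 1) (r : ℕ) (p : R2) :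
    (f.toLinearMap ^ r) (alg p) = alg ((Gd.toLinearMap ^ r) p) := by
  induction r with
  | zero => simp
  | succ r ih =>
    have h1 : (f.toLinearMap ^ (r+1)) (alg p) = f ((f.toLinearMap ^ r) (alg p)) := by
      rw [pow_succ', Module.End.mul_apply]; rfl
    rw [h1, ih, conj f hf1 hf2, ← Gd_pow_succ]

/-- The index equivalence. -/
def E : (Unit ⊕ ℕ ⊕ ({j : ℕ // 1 ≤ j} × ℕ)) ≃ ℕ × ℕ where
  toFun i := match i with
    | Sum.inl _ => (0, 0)
    | Sum.inr (Sum.inl r) => (r + 1, 0)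
    | Sum.inr (Sum.inr (j, r)) => (r, j.1)
  invFun p :=
    if h : p.2 = 0 then
      (if p.1 = 0 then Sum.inl () else Sum.inr (Sum.inl (p.1 - 1)))
    else Sum.inr (Sum.inr (⟨p.2, by omega⟩, p.1))
  left_inv i := by
    rcases i with u | r | ⟨⟨j, hj⟩, r⟩
    · simp
    · simp
    · have : j ≠ 0 := by omega
      simp [this]
  right_inv p := by
    rcases p with ⟨a, j⟩
    rcases Nat.eq_zero_or_pos j with hj | hj
    · rcases Nat.eq_zero_or_pos a with ha | ha
      · simp [hj, ha]
      · have ha' : a ≠ 0 := by omega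
        simp only [hj, ha', dif_pos, if_neg ha']
        simp
        omega
    · have hj' : j ≠ 0 := by omega
      simp [hj']

end
end Sl2Aux

open Sl2Aux in
/-- In `R = ℂ[E₁,E₂]` with the derivations `e, f, h` determined by
`e(E₁) = -2`, `e(E₂) = -E₁`; `f(E₁) = E₁² - 2E₂`, `f(E₂) = E₁E₂`;
`h(E₁) = -2E₁`, `h(E₂) = -4E₂`, and `δ = 4E₂ - E₁²`, the family consisting of `1`,
the iterates `f^r(E₁)` for `r : ℕ`, and the iterates `f^r(δʲ)` for `j ≥ 1`, `r : ℕ`,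
is a `ℂ`-basis of `R` (linearly independent and spanning). Here `E₁ = X 0`, `E₂ = X 1`. -/
theorem basis_of_CE1E2_from_sl2_decomposition
    (e f h : Derivation ℂ (MvPolynomial (Fin 2) ℂ) (MvPolynomial (Fin 2) ℂ))
    (he1 : e (X 0) = -2) (he2 : e (X 1) = -X 0)
    (hf1 : f (X 0) = X 0 ^ 2 - 2 * X 1) (hf2 : f (X 1) = X 0 * X 1)
    (hh1 : h (X 0) = -2 * X 0) (hh2 : h (X 1) = -4 * X 1)
    (δ : MvPolynomial (Fin 2) ℂ) (hδ : δ = 4 * X 1 - X 0 ^ 2)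
    (v : Unit ⊕ ℕ ⊕ ({j : ℕ // 1 ≤ j} × ℕ) → MvPolynomial (Fin 2) ℂ)
    (hv1 : ∀ u, v (Sum.inl u) = 1)
    (hv2 : ∀ r : ℕ, v (Sum.inr (Sum.inl r)) = (f.toLinearMap ^ r) (X 0))
    (hv3 : ∀ (j : {j : ℕ // 1 ≤ j}) (r : ℕ),
      v (Sum.inr (Sum.inr (j, r))) = (f.toLinearMap ^ r) (δ ^ (j : ℕ))) :
    LinearIndependent ℂ v ∧ Submodule.span ℂ (Set.range v) = ⊤ := by
  have key_eq : ∀ i, v i = alg (fam (E i)) := by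
    rintro (u | r | ⟨⟨j, hj⟩, r⟩)
    · rw [hv1]
      show (1 : R2) = alg (fam (0, 0))
      have hf0 : fam (0, 0) = 1 := by simp [fam]
      rw [hf0, map_one]
    · rw [hv2 r]
      have hE : E (Sum.inr (Sum.inl r)) = (r + 1, 0) := rfl
      rw [hE]
      have hfam : fam (r + 1, 0) = (Gd.toLinearMap ^ r) (X 0) := by simp [fam]
      rw [hfam, ← conj_pow f hf1 hf2 r (X 0), alg_X0]
    · rw [hv3 ⟨j, hj⟩ r]
      have h1 : δ = alg (X 1) := by rw [hδ, alg_X1]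
      have h2 : δ ^ j = alg (X 1 ^ j) := by rw [h1, map_pow]
      have hE : E (Sum.inr (Sum.inr (⟨j, hj⟩, r))) = (r, j) := rfl
      have hj0 : j ≠ 0 := by omega
      have hfam : fam (r, j) = (Gd.toLinearMap ^ r) (X 1 ^ j) := by simp [fam, hj0]
      rw [hE, hfam, h2, conj_pow f hf1 hf2]
  have hveq : v = (fun p => alg (fam p)) ∘ E := funext key_eq
  constructor
  · rw [hveq, linearIndependent_equiv E]
    have hco : (fun p => alg (fam p)) = (alg.toLinearEquiv.toLinearMap) ∘ fam := rfl
    rw [hco]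
    exact fam_indep.map' _ (LinearMap.ker_eq_bot.2 alg.toLinearEquiv.injective)
  · rw [hveq]
    have h1 : Set.range ((fun p => alg (fam p)) ∘ E) = Set.range (fun p => alg (fam p)) :=
      E.surjective.range_comp _
    have h2 : Set.range (fun p => alg (fam p))
        = alg.toLinearEquiv.toLinearMap '' Set.range fam := by
      rw [← Set.range_comp]; rfl
    rw [h1, h2, Submodule.span_image, fam_span, Submodule.map_top]
    exact LinearMap.range_eq_top.2 alg.toLinearEquiv.surjective
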